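/- Let T be a triangulated category with translation functor [1], and let F1, F2, F3, G1, G2, G3 : T → T be triangulated functors with natural transformations α_j : F_j → F_{j+1}, β_j : G_j → G_{j+1}, γ_j : F_j → G_j (j = 1, 2) satisfying γ_2 ∘ α_1 = β_1 ∘ γ_1. Assume that for every object X the sequences F1X → F2X → F3X → F1X[1] and G1X → G2X → G3X → G1X[1] are distinguished triangles, and that Hom_T(F1X, G3Y[-1]) = 0 for all objects X, Y. Then there exists a natural transformation γ_3 : F3 → G3 such that γ_3 ∘ α_2 = β_2 ∘ γ_2. -/

import Mathlib

open CategoryTheory CategoryTheory.Pretriangulated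

/-!
Componentwise, `γ₃` exists by the morphism axiom (TR3) applied to the two triangles. The vanishing
hypothesis says that no nonzero morphism `F₁X⟦1⟧ ⟶ G₃Y` exists, so by exactness of `Hom(-, G₃Y)`
along the `F`-triangle every morphism `F₃X ⟶ G₃Y` is determined by its composite with `α₂`.
This forces uniqueness of the components and hence their naturality.
-/

namespace CategoryTheory

lemma NatTrans.exists_factorization_of_app {C D : Type*} [Category C] [Category D]
    {F G H : C ⥤ D} (α : F ⟶ G) (φ : F ⟶ H)
    (hcancel : ∀ X Y : C, ∀ f g : G.obj X ⟶ H.obj Y, α.app X ≫ f = α.app X ≫ g → f = g)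
    (hfactor : ∀ X : C, ∃ c : G.obj X ⟶ H.obj X, α.app X ≫ c = φ.app X) :
    ∃ γ : G ⟶ H, α ≫ γ = φ := by
  choose c hc using hfactor
  refine ⟨{ app := c, naturality := fun X Y f => hcancel X Y _ _ ?_ }, by ext X; exact hc X⟩
  rw [← α.naturality_assoc, hc Y, reassoc_of% (hc X), φ.naturality]

lemma shift_hom_eq_zero_of_hom_shift_neg_eq_zero {C : Type*} [Category C]
    [Limits.HasZeroMorphisms C] [HasShift C ℤ] {A B : C} (n : ℤ)
    (hzero : ∀ f : A ⟶ B⟦-n⟧, f = 0) (h : A⟦n⟧ ⟶ B) : h = 0 := by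
  apply ((shiftEquiv C n).toAdjunction.homEquiv A B).injective
  exact (hzero _).trans (hzero _).symm

lemma Pretriangulated.Triangle.eq_of_mor₂_comp_eq {C : Type*} [Category C]
    [Limits.HasZeroObject C] [Preadditive C] [HasShift C ℤ]
    -- unqualified, `shiftFunctor` would resolve to `Triangle.shiftFunctor` here
    [∀ n : ℤ, (CategoryTheory.shiftFunctor C n).Additive] [Pretriangulated C]
    (S : Triangle C) (hS : S ∈ distTriang C) {Y : C}
    (hzero : ∀ h : S.obj₁⟦(1 : ℤ)⟧ ⟶ Y, h = 0) {f g : S.obj₃ ⟶ Y}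
    (hfg : S.mor₂ ≫ f = S.mor₂ ≫ g) : f = g := by
  obtain ⟨e, he⟩ := S.yoneda_exact₃ hS (f - g)
    (by rw [Preadditive.comp_sub, hfg, sub_self])
  rw [hzero e, Limits.comp_zero] at he
  exact sub_eq_zero.mp he

end CategoryTheory

/-- Lemma "induce natural transformation": given triangulated endofunctors `F₁, F₂, F₃, G₁, G₂, G₃`
of a (pre)triangulated category `T`, natural transformations `α₁ : F₁ ⟶ F₂`, `α₂ : F₂ ⟶ F₃`,
`β₁ : G₁ ⟶ G₂`, `β₂ : G₂ ⟶ G₃`, `γ₁ : F₁ ⟶ G₁`, `γ₂ : F₂ ⟶ G₂` with `γ₂ ∘ α₁ = β₁ ∘ γ₁`,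
such that for each object the `F`- and `G`-sequences fit into distinguished triangles, and
`Hom(F₁X, G₃Y[-1]) = 0` for all `X`, `Y`, there exists `γ₃ : F₃ ⟶ G₃` with
`γ₃ ∘ α₂ = β₂ ∘ γ₂`. -/
theorem stmt0 {T : Type*} [Category T] [Limits.HasZeroObject T] [Preadditive T]
    [HasShift T ℤ] [∀ n : ℤ, (shiftFunctor T n).Additive] [Pretriangulated T]
    (F₁ F₂ F₃ G₁ G₂ G₃ : T ⥤ T)
    [F₁.CommShift ℤ] [F₂.CommShift ℤ] [F₃.CommShift ℤ]
    [G₁.CommShift ℤ] [G₂.CommShift ℤ] [G₃.CommShift ℤ]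
    [F₁.IsTriangulated] [F₂.IsTriangulated] [F₃.IsTriangulated]
    [G₁.IsTriangulated] [G₂.IsTriangulated] [G₃.IsTriangulated]
    (α₁ : F₁ ⟶ F₂) (α₂ : F₂ ⟶ F₃) (β₁ : G₁ ⟶ G₂) (β₂ : G₂ ⟶ G₃)
    (γ₁ : F₁ ⟶ G₁) (γ₂ : F₂ ⟶ G₂)
    (hcomm : α₁ ≫ γ₂ = γ₁ ≫ β₁)
    (hF : ∀ X : T, ∃ δ : F₃.obj X ⟶ (F₁.obj X)⟦(1 : ℤ)⟧,
      Triangle.mk (α₁.app X) (α₂.app X) δ ∈ distTriang T)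
    (hG : ∀ X : T, ∃ δ : G₃.obj X ⟶ (G₁.obj X)⟦(1 : ℤ)⟧,
      Triangle.mk (β₁.app X) (β₂.app X) δ ∈ distTriang T)
    (hvanish : ∀ X Y : T, ∀ f : F₁.obj X ⟶ (G₃.obj Y)⟦(-1 : ℤ)⟧, f = 0) :
    ∃ γ₃ : F₃ ⟶ G₃, α₂ ≫ γ₃ = γ₂ ≫ β₂ := by
  choose δF hδF using hF
  choose δG hδG using hG
  refine NatTrans.exists_factorization_of_app α₂ (γ₂ ≫ β₂) (fun X Y f g hfg => ?_) fun X => ?_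
  · exact Triangle.eq_of_mor₂_comp_eq _ (hδF X)
      (shift_hom_eq_zero_of_hom_shift_neg_eq_zero 1 (hvanish X Y)) hfg
  · obtain ⟨c, hc, -⟩ := complete_distinguished_triangle_morphism _ _ (hδF X) (hδG X)
      (γ₁.app X) (γ₂.app X) (NatTrans.congr_app hcomm X)
    exact ⟨c, hc⟩
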